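/- arXiv:2210.06768 — 8 statements merged into one kernel-verified Lean document; each statement's English description precedes it below -/
import Mathlib

section
/- For every positive integer n and every real x > 0, F(x) - ∑_{k=1}^{n} (-1)^{k-1}(k-1)! x^{-k} = O(x^{-(n+1)}) as x → ∞, where F(x) = ∫_0^∞ e^{-t}/(t+x) dt. -/
/-!
Expanding `1 / (t + x)` as a finite geometric series in `-t / x` with exact remainder and
integrating against `e^{-t}` gives the partial sums, because `∫₀^∞ e^{-t} t^m dt = m!`. The
remainder is `(-1)^n x^{-n} ∫₀^∞ e^{-t} t^n / (t + x) dt`, and bounding `1 / (t + x)` by `1 / x`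
shows that this integral lies between `0` and `n! / x`.
-/

noncomputable def F (x : ℝ) : ℝ := ∫ t in Set.Ioi (0:ℝ), Real.exp (-t) / (t + x)

open MeasureTheory Set Filter Asymptotics Real

lemma inv_add_eq_sum_add_remainder {K : Type*} [Field K] (n : ℕ) {x t : K}
    (hx : x ≠ 0) (htx : t + x ≠ 0) :
    (t + x)⁻¹ = ∑ k ∈ Finset.Icc 1 n, (-1) ^ (k - 1) * x⁻¹ ^ k * t ^ (k - 1)
      + (-1) ^ n * x⁻¹ ^ n * (t ^ n / (t + x)) := by
  induction n with
  | zero => simp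
  | succ m ih =>
    rw [Finset.sum_Icc_succ_top (by omega), ih, Nat.add_sub_cancel, add_assoc]
    congr 1
    field_simp
    linear_combination -(x⁻¹ ^ m * t ^ m * (-1) ^ m) * mul_inv_cancel₀ hx

lemma integrableOn_exp_neg_mul_pow (m : ℕ) :
    IntegrableOn (fun t : ℝ => exp (-t) * t ^ m) (Ioi 0) := by
  refine (GammaIntegral_convergent (s := m + 1) (by positivity)).congr_fun
    (fun t _ => ?_) measurableSet_Ioi
  simp [rpow_natCast]

lemma integral_exp_neg_mul_pow (m : ℕ) :
    ∫ t in Ioi (0:ℝ), exp (-t) * t ^ m = m.factorial := by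
  rw [← Gamma_nat_eq_factorial, Gamma_eq_integral (by positivity)]
  refine setIntegral_congr_fun measurableSet_Ioi fun t _ => ?_
  simp [rpow_natCast]

section Remainder

variable {x : ℝ} (hx : 0 < x) (n : ℕ)
include hx

lemma exp_neg_mul_pow_div_add_le {t : ℝ} (ht : t ∈ Ioi 0) :
    exp (-t) * t ^ n / (t + x) ≤ exp (-t) * t ^ n / x :=
  div_le_div_of_nonneg_left (by have : 0 < t := ht; positivity) hx (by simp_all [le_of_lt])

lemma integrableOn_exp_neg_mul_pow_div_add :
    IntegrableOn (fun t : ℝ => exp (-t) * t ^ n / (t + x)) (Ioi 0) := by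
  refine Integrable.mono' ((integrableOn_exp_neg_mul_pow n).div_const x) ?_ ?_
  · refine ContinuousOn.aestronglyMeasurable (fun t ht => ?_) measurableSet_Ioi
    have : t + x ≠ 0 := by have : 0 < t := ht; positivity
    fun_prop (disch := exact this)
  · filter_upwards [ae_restrict_mem measurableSet_Ioi] with t ht
    have : 0 < t := ht
    rw [norm_of_nonneg (by positivity)]
    exact exp_neg_mul_pow_div_add_le hx n ht

lemma integral_exp_neg_mul_pow_div_add_nonneg :
    0 ≤ ∫ t in Ioi (0:ℝ), exp (-t) * t ^ n / (t + x) :=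
  setIntegral_nonneg measurableSet_Ioi fun t ht => by have : 0 < t := ht; positivity

lemma integral_exp_neg_mul_pow_div_add_le :
    ∫ t in Ioi (0:ℝ), exp (-t) * t ^ n / (t + x) ≤ n.factorial * x⁻¹ :=
  calc ∫ t in Ioi (0:ℝ), exp (-t) * t ^ n / (t + x)
      ≤ ∫ t in Ioi (0:ℝ), exp (-t) * t ^ n / x :=
        setIntegral_mono_on (integrableOn_exp_neg_mul_pow_div_add hx n)
          ((integrableOn_exp_neg_mul_pow n).div_const x) measurableSet_Ioi
          fun _ ht => exp_neg_mul_pow_div_add_le hx n ht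
    _ = n.factorial * x⁻¹ := by rw [integral_div, integral_exp_neg_mul_pow, div_eq_mul_inv]

lemma F_eq_sum_add_remainder :
    F x = ∑ k ∈ Finset.Icc 1 n, (-1 : ℝ) ^ (k - 1) * (k - 1).factorial * x⁻¹ ^ k
      + (-1) ^ n * x⁻¹ ^ n * ∫ t in Ioi (0:ℝ), exp (-t) * t ^ n / (t + x) := by
  have hterm (k : ℕ) : IntegrableOn (fun t => (-1 : ℝ) ^ (k - 1) * x⁻¹ ^ k *
      (exp (-t) * t ^ (k - 1))) (Ioi 0) := (integrableOn_exp_neg_mul_pow _).const_mul _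
  have hexpand : F x = ∫ t in Ioi (0:ℝ),
      (∑ k ∈ Finset.Icc 1 n, (-1 : ℝ) ^ (k - 1) * x⁻¹ ^ k * (exp (-t) * t ^ (k - 1))
        + (-1) ^ n * x⁻¹ ^ n * (exp (-t) * t ^ n / (t + x))) := by
    refine setIntegral_congr_fun measurableSet_Ioi fun t ht => ?_
    have : 0 < t := ht
    rw [div_eq_mul_inv, inv_add_eq_sum_add_remainder n hx.ne' (by positivity),
      mul_add, Finset.mul_sum]
    congr 1
    · exact Finset.sum_congr rfl fun _ _ => by ring
    · ring
  rw [hexpand, integral_add (integrable_finsetSum _ fun k _ => hterm k)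
      ((integrableOn_exp_neg_mul_pow_div_add hx n).const_mul _),
    integral_finsetSum _ fun k _ => hterm k, integral_const_mul]
  congr 1
  refine Finset.sum_congr rfl fun k _ => ?_
  rw [integral_const_mul, integral_exp_neg_mul_pow]
  ring

end Remainder

theorem stmt_0_general (n : ℕ) :
    (fun x : ℝ => F x - ∑ k ∈ Finset.Icc 1 n, (-1 : ℝ) ^ (k - 1) * (Nat.factorial (k - 1)) * x⁻¹ ^ k)
      =O[atTop] fun x : ℝ => x⁻¹ ^ (n + 1) := by
  refine isBigO_iff.2 ⟨n.factorial, ?_⟩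
  filter_upwards [eventually_gt_atTop (0:ℝ)] with x hx
  rw [F_eq_sum_add_remainder hx n, add_sub_cancel_left, norm_mul, norm_mul, norm_pow, norm_neg,
    norm_one, one_pow, one_mul, norm_pow, norm_pow, norm_of_nonneg (inv_nonneg.2 hx.le),
    norm_of_nonneg (integral_exp_neg_mul_pow_div_add_nonneg hx n)]
  calc x⁻¹ ^ n * ∫ t in Ioi (0:ℝ), exp (-t) * t ^ n / (t + x)
      ≤ x⁻¹ ^ n * (n.factorial * x⁻¹) := by
        gcongr
        exact integral_exp_neg_mul_pow_div_add_le hx n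
    _ = n.factorial * x⁻¹ ^ (n + 1) := by ring

open Filter in
theorem stmt_0 (n : ℕ) (hn : 1 ≤ n) :
    (fun x : ℝ => F x - ∑ k ∈ Finset.Icc 1 n, (-1 : ℝ) ^ (k - 1) * (Nat.factorial (k - 1)) * x⁻¹ ^ k)
      =O[atTop] fun x : ℝ => x⁻¹ ^ (n + 1) :=
  stmt_0_general n
end

section
/- For every positive integer i and every real x > 0, F^{(i)}(x) = F(x) - ∑_{l=1}^{i} (-1)^{l-1}(l-1)!/x^l. -/
open MeasureTheory Set Filter Topology Real

theorem hasDerivAt_integral_Ioi {E : Type*} [NormedAddCommGroup E] [NormedSpace ℝ E]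
    [CompleteSpace E] {f : ℝ → E} {a x : ℝ} (hf : IntegrableOn f (Ioi a)) (hax : a < x)
    (hfx : ContinuousAt f x) : HasDerivAt (fun y => ∫ t in Ioi y, f t) (-f x) x := by
  have h_split : (fun y => ∫ t in Ioi y, f t) =ᶠ[𝓝 x]
      fun y => (∫ t in Ioi a, f t) - ∫ t in a..y, f t := by
    filter_upwards [Ioi_mem_nhds hax] with y hy
    rw [← intervalIntegral.integral_Ioi_sub_Ioi hf hy.le, sub_sub_cancel]
  have h_ftc : HasDerivAt (fun y => ∫ t in a..y, f t) (f x) x :=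
    intervalIntegral.integral_hasDerivAt_right
      ((intervalIntegrable_iff_integrableOn_Ioc_of_le hax.le).2
        (hf.mono_set Ioc_subset_Ioi_self))
      (AEStronglyMeasurable.stronglyMeasurableAtFilter_of_mem hf.aestronglyMeasurable
        (Ioi_mem_nhds hax)) hfx
  exact (h_ftc.const_sub _).congr_of_eventuallyEq h_split

theorem iteratedDeriv_eq_sub_sum_of_hasDerivAt_sub {𝕜 E : Type*} [NontriviallyNormedField 𝕜]
    [NormedAddCommGroup E] [NormedSpace 𝕜 E] {f g : 𝕜 → E} {U : Set 𝕜} (hU : IsOpen U)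
    (hf : ∀ x ∈ U, HasDerivAt f (f x - g x) x)
    (hg : ∀ k, ∀ x ∈ U, DifferentiableAt 𝕜 (iteratedDeriv k g) x) (n : ℕ) :
    ∀ x ∈ U, iteratedDeriv n f x = f x - ∑ k ∈ Finset.range n, iteratedDeriv k g x := by
  induction n with
  | zero => simp
  | succ n ih =>
    intro x hx
    have h_local : iteratedDeriv n f =ᶠ[𝓝 x]
        fun y => f y - ∑ k ∈ Finset.range n, iteratedDeriv k g y :=
      eventually_of_mem (hU.mem_nhds hx) ih
    have h_deriv := (hf x hx).fun_sub
      (HasDerivAt.fun_sum (u := Finset.range n) fun k _ => (hg k x hx).hasDerivAt)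
    rw [iteratedDeriv_succ, h_local.deriv_eq, h_deriv.deriv, Finset.sum_range_succ']
    simp only [iteratedDeriv_succ, iteratedDeriv_zero]
    abel

theorem iteratedDeriv_inv_apply {𝕜 : Type*} [NontriviallyNormedField 𝕜] (k : ℕ) (x : 𝕜) :
    iteratedDeriv k (fun y : 𝕜 => y⁻¹) x = (-1) ^ k * k.factorial / x ^ (k + 1) := by
  rw [iteratedDeriv_eq_iterate, iter_deriv_inv, div_eq_mul_inv,
    show (-1 - k : ℤ) = -((k + 1 : ℕ) : ℤ) by push_cast; ring, zpow_neg, zpow_natCast]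

theorem differentiableAt_iteratedDeriv_inv {𝕜 : Type*} [NontriviallyNormedField 𝕜] (k : ℕ)
    {x : 𝕜} (hx : x ≠ 0) : DifferentiableAt 𝕜 (iteratedDeriv k (fun y : 𝕜 => y⁻¹)) x := by
  rw [iteratedDeriv_eq_iterate, iter_deriv_inv']
  exact (differentiableAt_zpow.2 (Or.inl hx)).const_mul _

theorem integrableOn_exp_neg_div_Ioi {c : ℝ} (hc : 0 < c) :
    IntegrableOn (fun u => exp (-u) / u) (Ioi c) := by
  refine ((exp_neg_integrableOn_Ioi c one_pos).mul_const c⁻¹).mono'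
    (by fun_prop : Measurable fun u : ℝ => exp (-u) / u).aestronglyMeasurable ?_
  filter_upwards [ae_restrict_mem measurableSet_Ioi] with u (hu : c < u)
  rw [norm_div, norm_of_nonneg (exp_pos _).le, norm_of_nonneg (hc.trans hu).le, neg_one_mul,
    ← div_eq_mul_inv]
  gcongr

theorem F_eq_exp_mul_integral_Ioi (x : ℝ) : F x = exp x * ∫ u in Ioi x, exp (-u) / u := by
  have h_shift : ∫ t in Ioi (0 : ℝ), exp (-(t + x)) / (t + x) = ∫ u in Ioi x, exp (-u) / u := by
    simpa using (measurePreserving_add_right volume x).setIntegral_preimage_emb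
      (measurableEmbedding_addRight x) (fun u => exp (-u) / u) (Ioi x)
  rw [F, ← h_shift, ← integral_const_mul]
  congr 1 with t
  rw [mul_div_assoc', ← exp_add]
  ring_nf

theorem hasDerivAt_F {x : ℝ} (hx : 0 < x) : HasDerivAt F (F x - x⁻¹) x := by
  have h_E1 := hasDerivAt_integral_Ioi (integrableOn_exp_neg_div_Ioi (half_pos hx))
    (half_lt_self hx) (by fun_prop (disch := exact hx.ne'))
  have h := (hasDerivAt_exp x).fun_mul h_E1
  rw [← funext F_eq_exp_mul_integral_Ioi, ← F_eq_exp_mul_integral_Ioi] at h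
  refine h.congr_deriv ?_
  rw [mul_neg, mul_div_assoc', ← exp_add, add_neg_cancel, exp_zero, one_div, sub_eq_add_neg]

theorem stmt_2_general (i : ℕ) (x : ℝ) (hx : 0 < x) :
    iteratedDeriv i F x =
      F x - ∑ l ∈ Finset.Icc 1 i, (-1 : ℝ) ^ (l - 1) * (Nat.factorial (l - 1)) / x ^ l := by
  rw [iteratedDeriv_eq_sub_sum_of_hasDerivAt_sub isOpen_Ioi (fun y hy => hasDerivAt_F hy)
    (fun k y hy => differentiableAt_iteratedDeriv_inv k (ne_of_gt hy)) i x hx,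
    ← Finset.Ico_add_one_right_eq_Icc, Finset.sum_Ico_eq_sum_range, add_tsub_cancel_right]
  simp only [iteratedDeriv_inv_apply, add_comm 1, add_tsub_cancel_right]

theorem stmt_2 (i : ℕ) (hi : 1 ≤ i) (x : ℝ) (hx : 0 < x) :
    iteratedDeriv i F x =
      F x - ∑ l ∈ Finset.Icc 1 i, (-1 : ℝ) ^ (l - 1) * (Nat.factorial (l - 1)) / x ^ l :=
  stmt_2_general i x hx
end

section
/- For every real x > 0, F'(x) = F(x) - 1/x. -/
/-!
Differentiating under the integral sign gives `F' x = -∫ e^{-t} / (t + x)^2`. Integrating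
`d/dt (e^{-t} / (t + x)) = -e^{-t} / (t + x) - e^{-t} / (t + x)^2` over `(0, ∞)`, where the
antiderivative runs from `1 / x` down to `0`, evaluates that integral as `1 / x - F x`.
-/

open MeasureTheory Set Filter Real Topology

section StieltjesTransform

variable {g : ℝ → ℝ} {x : ℝ}

lemma integrableOn_div_add_pow (hg : IntegrableOn g (Ioi 0)) (hx : 0 < x) (n : ℕ) :
    IntegrableOn (fun t => g t / (t + x) ^ n) (Ioi 0) := by
  simp_rw [div_eq_mul_inv]
  refine Integrable.mul_bdd (c := (x ^ n)⁻¹) hg (by fun_prop) ?_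
  filter_upwards [ae_restrict_mem measurableSet_Ioi] with t (ht : 0 < t)
  rw [norm_inv, norm_pow, Real.norm_of_nonneg (by linarith)]
  gcongr
  linarith

lemma hasDerivAt_integral_div_add (hg : IntegrableOn g (Ioi 0)) (hx : 0 < x) :
    HasDerivAt (fun y => ∫ t in Ioi 0, g t / (t + y)) (-∫ t in Ioi 0, g t / (t + x) ^ 2) x := by
  have hpos : ∀ t ∈ Ioi (0:ℝ), ∀ y ∈ Metric.ball x (x / 2), x / 2 < t + y := by
    intro t (ht : 0 < t) y hy
    linarith [(abs_lt.mp (Real.dist_eq y x ▸ Metric.mem_ball.mp hy)).1]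
  rw [← integral_neg]
  refine (hasDerivAt_integral_of_dominated_loc_of_deriv_le
    (F := fun y t => g t / (t + y)) (F' := fun y t => -(g t / (t + y) ^ 2))
    (bound := fun t => ‖g t‖ / (x / 2) ^ 2) (Metric.ball_mem_nhds x (half_pos hx))
    (Eventually.of_forall fun y => hg.aestronglyMeasurable.div₀ (by fun_prop))
    (by simpa [IntegrableOn] using integrableOn_div_add_pow hg hx 1)
    (integrableOn_div_add_pow hg hx 2).neg.aestronglyMeasurable ?_
    (hg.norm.div_const _) ?_).2
  · filter_upwards [ae_restrict_mem measurableSet_Ioi] with t ht y hy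
    have h := hpos t ht y hy
    rw [norm_neg, norm_div, norm_pow, Real.norm_of_nonneg (r := t + y) (by linarith)]
    gcongr
  · filter_upwards [ae_restrict_mem measurableSet_Ioi] with t ht y hy
    have h := hpos t ht y hy
    exact ((hasDerivAt_const y (g t)).div ((hasDerivAt_id' y).const_add t)
      (by linarith)).congr_deriv (by ring)

end StieltjesTransform

lemma integral_exp_neg_div_add_sq {x : ℝ} (hx : 0 < x) :
    ∫ t in Ioi 0, exp (-t) / (t + x) ^ 2 = 1 / x - F x := by
  have h1 : IntegrableOn (fun t => exp (-t) / (t + x)) (Ioi 0) := by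
    simpa using integrableOn_div_add_pow (integrableOn_exp_neg_Ioi 0) hx 1
  have h2 := integrableOn_div_add_pow (integrableOn_exp_neg_Ioi 0) hx 2
  have hderiv : ∀ t ∈ Ici (0:ℝ), HasDerivAt (fun t => exp (-t) / (t + x))
      (-(exp (-t) / (t + x)) - exp (-t) / (t + x) ^ 2) t := by
    intro t (ht : 0 ≤ t)
    refine ((hasDerivAt_neg' t).exp.div ((hasDerivAt_id' t).add_const x)
      (by linarith)).congr_deriv ?_
    field_simp
  have hlim : Tendsto (fun t => exp (-t) / (t + x)) atTop (𝓝 0) :=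
    tendsto_exp_neg_atTop_nhds_zero.div_atTop (tendsto_atTop_add_const_right _ x tendsto_id)
  have ibp := integral_Ioi_of_hasDerivAt_of_tendsto' hderiv (h1.neg.sub h2) hlim
  rw [integral_sub (f := fun t => -(exp (-t) / (t + x))) h1.neg h2, integral_neg] at ibp
  simp only [neg_zero, exp_zero, zero_add] at ibp
  rw [F]
  linarith

theorem stmt_3 (x : ℝ) (hx : 0 < x) : deriv F x = F x - 1 / x := by
  have hF : HasDerivAt F _ x := hasDerivAt_integral_div_add (integrableOn_exp_neg_Ioi 0) hx
  rw [hF.deriv, integral_exp_neg_div_add_sq hx]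
  ring
end

section
/- For every positive integer k and every real x > 0, Q_{2k}(x) = ∑_{i=0}^{k} (C(k,i)/i!) x^i and Q_{2k-1}(x) = ∑_{i=0}^{k-1} (C(k,i+1)/i!) x^{i+1}, where the polynomials Q_n are defined by the recurrence Q_{-1} = 0, Q_0 = 1, Q_n(x) = c_n Q_{n-1}(x) + Q_{n-2}(x), with c_n = x if n is odd and c_n = 2/n if n is even. -/
/-!
Split by parity, the recurrence reads `Q_{2k} = x Q_{2k-1} + Q_{2k-2}` and
`Q_{2k+1} = Q_{2k}/(k+1) + Q_{2k-1}`, and both closed forms satisfy it, so induction on `k`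
concludes. Comparing coefficients of `x^(i+1)`, the first identity is Pascal's rule and the
second is Pascal's rule combined with `(k+1) C(k,i) = (i+1) C(k+1,i+1)`.
-/

noncomputable def c (n : ℕ) (x : ℝ) : ℝ := if n % 2 = 1 then x else 2 / n

/-- `P n` is the paper's `P_{n-1}` (so `P 0 = P_{-1} = 1`, `P 1 = P_0 = 0`). -/
noncomputable def P : ℕ → ℝ → ℝ
  | 0 => fun _ => 1
  | 1 => fun _ => 0
  | (n + 2) => fun x => c (n + 1) x * P (n + 1) x + P n x

/-- `Q n` is the paper's `Q_{n-1}` (so `Q 0 = Q_{-1} = 0`, `Q 1 = Q_0 = 1`). -/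
noncomputable def Q : ℕ → ℝ → ℝ
  | 0 => fun _ => 0
  | 1 => fun _ => 1
  | (n + 2) => fun x => c (n + 1) x * Q (n + 1) x + Q n x

open Finset

theorem Q_two_mul_add_two (k : ℕ) (x : ℝ) :
    Q (2 * k + 2) x = x * Q (2 * k + 1) x + Q (2 * k) x := by
  simp only [Q, c, show (2 * k + 1) % 2 = 1 by omega, if_true]

theorem Q_two_mul_add_three (k : ℕ) (x : ℝ) :
    Q (2 * k + 3) x = Q (2 * k + 2) x / (k + 1) + Q (2 * k + 1) x := by
  change c (2 * k + 2) x * Q (2 * k + 2) x + Q (2 * k + 1) x = _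
  rw [c, if_neg (by omega)]
  push_cast
  field_simp

/-- The paper's closed form of `Q_{2k}`, i.e. of `Q (2 * k + 1)`. -/
noncomputable def evenClosedForm (k : ℕ) (x : ℝ) : ℝ :=
  ∑ i ∈ range (k + 1), (k.choose i : ℝ) / i.factorial * x ^ i

/-- The paper's closed form of `Q_{2k-1}`, i.e. of `Q (2 * k)`. -/
noncomputable def oddClosedForm (k : ℕ) (x : ℝ) : ℝ :=
  ∑ i ∈ range k, (k.choose (i + 1) : ℝ) / i.factorial * x ^ (i + 1)

theorem oddClosedForm_eq_sum_range_succ (k : ℕ) (x : ℝ) :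
    oddClosedForm k x = ∑ i ∈ range (k + 1), (k.choose (i + 1) : ℝ) / i.factorial * x ^ (i + 1) := by
  simp [oddClosedForm, sum_range_succ]

theorem oddClosedForm_succ (k : ℕ) (x : ℝ) :
    oddClosedForm (k + 1) x = x * evenClosedForm k x + oddClosedForm k x := by
  rw [oddClosedForm_eq_sum_range_succ k, evenClosedForm, mul_sum, ← sum_add_distrib]
  refine sum_congr rfl fun i _ => ?_
  rw [Nat.choose_succ_succ]
  push_cast
  ring

theorem choose_succ_div_factorial_succ (k i : ℕ) :
    ((k + 1).choose (i + 1) : ℝ) / (i + 1).factorial =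
      (k + 1).choose (i + 1) / i.factorial / (k + 1) + k.choose (i + 1) / (i + 1).factorial := by
  have hmul : ((k : ℝ) + 1) * k.choose i = (k + 1).choose (i + 1) * (i + 1) := by
    exact_mod_cast Nat.add_one_mul_choose_eq k i
  have hpascal : ((k + 1).choose (i + 1) : ℝ) = k.choose i + k.choose (i + 1) := by
    exact_mod_cast Nat.choose_succ_succ k i
  rw [Nat.factorial_succ]
  push_cast
  field_simp
  linear_combination hmul + ((k : ℝ) + 1) * hpascal

theorem evenClosedForm_succ (k : ℕ) (x : ℝ) :
    evenClosedForm (k + 1) x = oddClosedForm (k + 1) x / (k + 1) + evenClosedForm k x := by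
  have hshift : evenClosedForm k x =
      1 + ∑ i ∈ range (k + 1), (k.choose (i + 1) : ℝ) / (i + 1).factorial * x ^ (i + 1) := by
    rw [evenClosedForm, sum_range_succ', sum_range_succ]
    simp [add_comm]
  rw [hshift, evenClosedForm, sum_range_succ', oddClosedForm, sum_div]
  simp only [Nat.choose_zero_right, Nat.factorial_zero, pow_zero, Nat.cast_one, div_one, one_mul]
  rw [add_left_comm, ← sum_add_distrib, add_comm]
  congr 1
  refine sum_congr rfl fun i _ => ?_
  rw [choose_succ_div_factorial_succ]
  ring

theorem stmt_6_general (k : ℕ) (x : ℝ) :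
    Q (2 * k + 1) x = ∑ i ∈ Finset.range (k + 1), (Nat.choose k i : ℝ) / (Nat.factorial i) * x ^ i ∧
    Q (2 * k) x = ∑ i ∈ Finset.range k, (Nat.choose k (i + 1) : ℝ) / (Nat.factorial i) * x ^ (i + 1) := by
  change Q (2 * k + 1) x = evenClosedForm k x ∧ Q (2 * k) x = oddClosedForm k x
  induction k with
  | zero => simp [Q, evenClosedForm, oddClosedForm]
  | succ k ih =>
    obtain ⟨ihEven, ihOdd⟩ := ih
    have hOddSucc : Q (2 * (k + 1)) x = oddClosedForm (k + 1) x := by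
      rw [oddClosedForm_succ, mul_add_one, Q_two_mul_add_two, ihEven, ihOdd]
    refine ⟨?_, hOddSucc⟩
    rw [evenClosedForm_succ, ← hOddSucc, ← ihEven, mul_add_one, Q_two_mul_add_three]

theorem stmt_6 (k : ℕ) (hk : 1 ≤ k) (x : ℝ) (hx : 0 < x) :
    Q (2 * k + 1) x = ∑ i ∈ Finset.range (k + 1), (Nat.choose k i : ℝ) / (Nat.factorial i) * x ^ i ∧
    Q (2 * k) x = ∑ i ∈ Finset.range k, (Nat.choose k (i + 1) : ℝ) / (Nat.factorial i) * x ^ (i + 1) :=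
  stmt_6_general k x
end

section
/- For every positive integer k and every real x > 0, Q_{2k}(x) ≥ (x+1)^K where K = ⌊√k⌋, and Q_{2k-1}(x) ≥ x(x+1)^L where L = ⌊(-1+√(1+4k))/2⌋. -/
open Finset Nat

/-!
If `n * n ≤ k` then `i ! * n.choose i ≤ k.choose i` for every `i`: in descending factorials this
is the termwise bound `(j + 1) * (n - j) ≤ k - j`. Hence `(x + 1) ^ n = ∑ n.choose i * x ^ i` is
dominated coefficientwise by `Q_{2k}(x)`, which gives the even case with `n = ⌊√k⌋`. In the odd
case `L * (L + 1) ≤ k` forces `L * L ≤ k - 1`, and `(k - 1).choose i ≤ k.choose (i + 1)` bounds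
`Q_{2k-1}(x)` below by `x * Q_{2(k-1)}(x)`.
-/

theorem factorial_mul_descFactorial_le_descFactorial {n k : ℕ} (h : n * n ≤ k) :
    ∀ i ≤ n, i ! * n.descFactorial i ≤ k.descFactorial i := by
  intro i
  induction i with
  | zero => simp
  | succ i ih =>
    intro hi
    obtain ⟨d, rfl⟩ : ∃ d, n = i + 1 + d := ⟨n - (i + 1), by omega⟩
    have hfactor : (i + 1) * (i + 1 + d - i) ≤ k - i := by
      rw [show i + 1 + d - i = d + 1 by omega]
      apply Nat.le_sub_of_add_le
      nlinarith
    rw [factorial_succ, descFactorial_succ, descFactorial_succ]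
    calc (i + 1) * i ! * ((i + 1 + d - i) * (i + 1 + d).descFactorial i)
        = (i + 1) * (i + 1 + d - i) * (i ! * (i + 1 + d).descFactorial i) := by ring
      _ ≤ (k - i) * k.descFactorial i := Nat.mul_le_mul hfactor (ih (by omega))

theorem factorial_mul_choose_le_choose {n k : ℕ} (h : n * n ≤ k) (i : ℕ) :
    i ! * n.choose i ≤ k.choose i := by
  rcases le_or_gt i n with hi | hi
  · apply Nat.le_of_mul_le_mul_left _ i.factorial_pos
    simpa only [descFactorial_eq_factorial_mul_choose] using
      factorial_mul_descFactorial_le_descFactorial h i hi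
  · simp [choose_eq_zero_of_lt hi]

theorem add_one_pow_le_sum_choose_div_factorial {n k : ℕ} (h : n * n ≤ k) {x : ℝ} (hx : 0 ≤ x) :
    (x + 1) ^ n ≤ ∑ i ∈ range (k + 1), (k.choose i : ℝ) / i ! * x ^ i := by
  have hterm (i : ℕ) : (n.choose i : ℝ) ≤ k.choose i / i ! := by
    rw [le_div_iff₀ (by positivity)]
    exact_mod_cast (mul_comm (n.choose i) i !).trans_le (factorial_mul_choose_le_choose h i)
  calc (x + 1) ^ n = ∑ i ∈ range (n + 1), (n.choose i : ℝ) * x ^ i := by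
        rw [add_pow]
        exact sum_congr rfl fun i _ => by ring
    _ ≤ ∑ i ∈ range (n + 1), (k.choose i : ℝ) / i ! * x ^ i :=
        sum_le_sum fun i _ => mul_le_mul_of_nonneg_right (hterm i) (by positivity)
    _ ≤ ∑ i ∈ range (k + 1), (k.choose i : ℝ) / i ! * x ^ i :=
        sum_le_sum_of_subset_of_nonneg
          (range_subset_range.mpr (by linarith [n.le_mul_self])) fun i _ _ => by positivity

theorem floor_half_sqrt_mul_add_one_le (k : ℕ) :
    ⌊(-1 + √(1 + 4 * k)) / 2⌋₊ * (⌊(-1 + √(1 + 4 * k)) / 2⌋₊ + 1) ≤ k := by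
  set y := (-1 + √(1 + 4 * k)) / 2
  have hy : 0 ≤ y := by
    have : 1 ≤ √(1 + 4 * k) := Real.one_le_sqrt.mpr (by linarith [(k.cast_nonneg : (0 : ℝ) ≤ k)])
    simp only [y]
    linarith
  have hyk : y * (y + 1) = k := by
    have := Real.sq_sqrt (by positivity : (0 : ℝ) ≤ 1 + 4 * k)
    linear_combination this / 4
  have hL := Nat.floor_le hy
  have : (⌊y⌋₊ : ℝ) * (⌊y⌋₊ + 1) ≤ k := hyk ▸ by gcongr
  exact_mod_cast this

theorem stmt_7 (k : ℕ) (hk : 1 ≤ k) (x : ℝ) (hx : 0 < x) :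
    (∑ i ∈ Finset.range (k + 1), (Nat.choose k i : ℝ) / (Nat.factorial i) * x ^ i)
        ≥ (x + 1) ^ (Nat.sqrt k) ∧
    (∑ i ∈ Finset.range k, (Nat.choose k (i + 1) : ℝ) / (Nat.factorial i) * x ^ (i + 1))
        ≥ x * (x + 1) ^ (⌊(-1 + Real.sqrt (1 + 4 * k)) / 2⌋₊) := by
  refine ⟨add_one_pow_le_sum_choose_div_factorial (Nat.sqrt_le k) hx.le, ?_⟩
  obtain ⟨m, rfl⟩ : ∃ m, k = m + 1 := ⟨k - 1, by omega⟩
  have hL := floor_half_sqrt_mul_add_one_le (m + 1)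
  set L := ⌊(-1 + √(1 + 4 * ((m + 1 : ℕ) : ℝ))) / 2⌋₊
  have hLm : L * L ≤ m := by
    rcases Nat.eq_zero_or_pos L with h0 | h0
    · simp [h0]
    · nlinarith
  calc x * (x + 1) ^ L
      ≤ x * ∑ i ∈ range (m + 1), (m.choose i : ℝ) / i ! * x ^ i :=
        mul_le_mul_of_nonneg_left (add_one_pow_le_sum_choose_div_factorial hLm hx.le) hx.le
    _ = ∑ i ∈ range (m + 1), (m.choose i : ℝ) / i ! * x ^ (i + 1) := by
        rw [mul_sum]
        exact sum_congr rfl fun i _ => by ring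
    _ ≤ ∑ i ∈ range (m + 1), ((m + 1).choose (i + 1) : ℝ) / i ! * x ^ (i + 1) := by
        gcongr with i
        exact_mod_cast (choose_succ_succ m i).symm ▸ Nat.le_add_right _ _
end

section
/- For every real x > 0, Q_n(x) → ∞ as n → ∞. -/
lemma c_odd (k : ℕ) (x : ℝ) : c (2 * k + 1) x = x := by
  have h : (2 * k + 1) % 2 = 1 := by omega
  simp [c, h]

lemma c_even (k : ℕ) (x : ℝ) : c (2 * k + 2) x = 2 / (2 * k + 2 : ℕ) := by
  have : (2 * k + 2) % 2 = 0 := by omega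
  simp [c, this]

lemma Q_bound (x : ℝ) (hx : 0 < x) (k : ℕ) :
    1 + k * x ≤ Q (2 * k + 1) x ∧ (k + 1 : ℝ) * x ≤ Q (2 * k + 2) x := by
  induction k with
  | zero =>
    constructor
    · simp [Q]
    · have : Q 2 x = c 1 x * Q 1 x + Q 0 x := rfl
      rw [this]
      have : c 1 x = x := by simp [c]
      simp [this, Q]
  | succ k ih =>
    obtain ⟨h1, h2⟩ := ih
    have hQodd : (0:ℝ) ≤ Q (2 * k + 1) x := by nlinarith [h1, hx, (Nat.cast_nonneg k : (0:ℝ) ≤ k)]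
    have hk : (0:ℝ) ≤ (k : ℝ) := Nat.cast_nonneg k
    have hQodd' : (0:ℝ) < Q (2 * k + 1) x := by nlinarith
    have hQev : (0:ℝ) < Q (2 * k + 2) x := by nlinarith
    -- Q (2k+3) = c (2k+2) * Q(2k+2) + Q(2k+1)
    have e3 : Q (2 * k + 3) x = c (2 * k + 2) x * Q (2 * k + 2) x + Q (2 * k + 1) x := by
      have : 2 * k + 3 = (2 * k + 1) + 2 := by omega
      rw [this]; rfl
    have hc2 : c (2 * k + 2) x = 1 / ((k : ℝ) + 1) := by
      rw [c_even]
      push_cast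
      field_simp
    have h3 : 1 + ((k : ℝ) + 1) * x ≤ Q (2 * k + 3) x := by
      rw [e3, hc2]
      have hpos : (0:ℝ) < (k : ℝ) + 1 := by positivity
      have : ((k : ℝ) + 1) * x ≤ Q (2 * k + 2) x := h2
      have hdiv : x ≤ 1 / ((k : ℝ) + 1) * Q (2 * k + 2) x := by
        rw [one_div, inv_mul_eq_div, le_div_iff₀ hpos]
        linarith [h2]
      nlinarith [h1, hdiv]
    have e4 : Q (2 * k + 4) x = c (2 * k + 3) x * Q (2 * k + 3) x + Q (2 * k + 2) x := by
      have : 2 * k + 4 = (2 * k + 2) + 2 := by omega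
      rw [this]; rfl
    have hc3 : c (2 * k + 3) x = x := by
      have : 2 * k + 3 = 2 * (k + 1) + 1 := by omega
      rw [this, c_odd]
    have h4 : ((k : ℝ) + 2) * x ≤ Q (2 * k + 4) x := by
      rw [e4, hc3]
      have key : x * (1 + ((k:ℝ) + 1) * x) ≤ x * Q (2 * k + 3) x :=
        mul_le_mul_of_nonneg_left h3 hx.le
      have hsq : (0:ℝ) ≤ ((k:ℝ) + 1) * x ^ 2 := by positivity
      nlinarith [key, h2, hsq]
    constructor
    · have : 2 * (k + 1) + 1 = 2 * k + 3 := by omega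
      rw [this]; push_cast; linarith
    · have : 2 * (k + 1) + 2 = 2 * k + 4 := by omega
      rw [this]; push_cast; linarith

lemma Q_lower (x : ℝ) (hx : 0 < x) (n : ℕ) : (n : ℝ) / 2 * x ≤ Q (n + 1) x := by
  rcases Nat.even_or_odd n with ⟨k, hk⟩ | ⟨k, hk⟩
  · subst hk
    have h := (Q_bound x hx k).1
    have : (k + k : ℕ) + 1 = 2 * k + 1 := by omega
    rw [this]
    push_cast
    nlinarith [h, hx, (Nat.cast_nonneg k : (0:ℝ) ≤ k)]
  · subst hk
    have h := (Q_bound x hx k).2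
    have : (2 * k + 1) + 1 = 2 * k + 2 := by omega
    rw [this]
    push_cast
    nlinarith [h, hx, (Nat.cast_nonneg k : (0:ℝ) ≤ k)]

/-- `Q (n+1)` is the paper's `Q_n`. -/
theorem stmt_8 (x : ℝ) (hx : 0 < x) :
    Filter.Tendsto (fun n : ℕ => Q (n + 1) x) Filter.atTop Filter.atTop := by
  have h : Filter.Tendsto (fun n : ℕ => (n : ℝ) / 2 * x) Filter.atTop Filter.atTop := by
    apply Filter.Tendsto.atTop_mul_const hx
    exact (tendsto_natCast_atTop_atTop).atTop_div_const two_pos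
  exact Filter.tendsto_atTop_mono (Q_lower x hx) h
end

section
/- Define γ_m(x) := 2 Q_m(x) Q_{m-1}(x) − x P_m(x) Q_{m-1}(x) − x P_{m-1}(x) Q_m(x) + x P_m'(x) Q_{m-1}(x) + x P_{m-1}'(x) Q_m(x) − x P_m(x) Q_{m-1}'(x) − x P_{m-1}(x) Q_m'(x). Then for every integer m ≥ 1, γ_{m+1}(x) = (−1)^m x. -/
/-- The paper's `γ_m(x)`, where `P (n+1)`, `Q (n+1)` are the paper's `P_n`, `Q_n`. -/
noncomputable def γ (m : ℕ) (x : ℝ) : ℝ :=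
  2 * Q (m + 1) x * Q m x - x * P (m + 1) x * Q m x - x * P m x * Q (m + 1) x
    + x * deriv (P (m + 1)) x * Q m x + x * deriv (P m) x * Q (m + 1) x
    - x * P (m + 1) x * deriv (Q m) x - x * P m x * deriv (Q (m + 1)) x

noncomputable def cp (n : ℕ) : Polynomial ℝ :=
  if n % 2 = 1 then Polynomial.X else Polynomial.C (2 / (n : ℝ))

noncomputable def pp : ℕ → Polynomial ℝ
  | 0 => 1
  | 1 => 0
  | (n + 2) => cp (n + 1) * pp (n + 1) + pp n

noncomputable def qq : ℕ → Polynomial ℝ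
  | 0 => 0
  | 1 => 1
  | (n + 2) => cp (n + 1) * qq (n + 1) + qq n

lemma pp_rec (n : ℕ) : pp (n + 2) = cp (n + 1) * pp (n + 1) + pp n := rfl
lemma qq_rec (n : ℕ) : qq (n + 2) = cp (n + 1) * qq (n + 1) + qq n := rfl

lemma cp_eval (n : ℕ) (x : ℝ) : (cp n).eval x = c n x := by
  unfold cp c; split <;> simp

lemma P_eq_aux : ∀ n, (P n = fun x => (pp n).eval x) ∧ (Q n = fun x => (qq n).eval x)
    ∧ (P (n+1) = fun x => (pp (n+1)).eval x) ∧ (Q (n+1) = fun x => (qq (n+1)).eval x) := by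
  intro n
  induction n with
  | zero => refine ⟨?_, ?_, ?_, ?_⟩ <;> funext x <;> simp [P, Q, pp, qq]
  | succ k ih =>
    obtain ⟨h1, h2, h3, h4⟩ := ih
    refine ⟨h3, h4, ?_, ?_⟩ <;> funext x
    · show c (k+1) x * P (k+1) x + P k x = _
      rw [pp_rec]
      simp [h1, h3, cp_eval]
    · show c (k+1) x * Q (k+1) x + Q k x = _
      rw [qq_rec]
      simp [h2, h4, cp_eval]

lemma P_eq (n : ℕ) : P n = fun x => (pp n).eval x := (P_eq_aux n).1
lemma Q_eq (n : ℕ) : Q n = fun x => (qq n).eval x := (P_eq_aux n).2.1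

lemma derivP (n : ℕ) (x : ℝ) : deriv (P n) x = ((pp n).derivative).eval x := by
  rw [P_eq]; exact Polynomial.deriv _
lemma derivQ (n : ℕ) (x : ℝ) : deriv (Q n) x = ((qq n).derivative).eval x := by
  rw [Q_eq]; exact Polynomial.deriv _

open Polynomial in
/-- polynomial version of `γ m` -/
noncomputable def Γ (m : ℕ) : Polynomial ℝ :=
  2 * qq (m + 1) * qq m - X * pp (m + 1) * qq m - X * pp m * qq (m + 1)
    + X * (pp (m + 1)).derivative * qq m + X * (pp m).derivative * qq (m + 1)
    - X * pp (m + 1) * (qq m).derivative - X * pp m * (qq (m + 1)).derivative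

open Polynomial in
noncomputable def KQ (m : ℕ) : Polynomial ℝ :=
  (qq (m + 1))^2 - X * pp (m + 1) * qq (m + 1)
    + X * ((pp (m + 1)).derivative * qq (m + 1) - pp (m + 1) * (qq (m + 1)).derivative)

noncomputable def WQ (m : ℕ) : Polynomial ℝ :=
  pp (m + 1) * qq m - pp m * qq (m + 1)

lemma γ_eq (m : ℕ) (x : ℝ) : γ m x = (Γ m).eval x := by
  simp only [γ, Γ, P_eq, Q_eq, Polynomial.deriv, Polynomial.eval_add, Polynomial.eval_sub,
    Polynomial.eval_mul, Polynomial.eval_X, Polynomial.eval_ofNat]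

lemma hGamma (n : ℕ) : Γ (n + 2) = Γ (n + 1) + 2 * cp (n + 2) * KQ (n + 1) := by
  simp only [Γ, KQ, show n + 2 + 1 = (n + 1) + 2 from rfl, pp_rec, qq_rec,
    Polynomial.derivative_add, Polynomial.derivative_mul]
  ring

lemma hKrec (n : ℕ) : KQ (n + 2) = cp (n + 2)^2 * KQ (n + 1) + cp (n + 2) * Γ (n + 1)
    + KQ n + (cp (n + 2)).derivative * Polynomial.X * WQ (n + 1) := by
  simp only [Γ, KQ, WQ, show n + 2 + 1 = (n + 1) + 2 from rfl, pp_rec, qq_rec,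
    Polynomial.derivative_add, Polynomial.derivative_mul]
  ring

lemma hWrec (n : ℕ) : WQ (n + 2) = - WQ (n + 1) := by
  simp only [WQ, show n + 2 + 1 = (n + 1) + 2 from rfl, pp_rec, qq_rec]
  ring

def SS (m : ℕ) : Prop :=
  (∀ x : ℝ, (Γ m).eval x = (-1 : ℝ)^(m+1) * x)
  ∧ (∀ x : ℝ, (KQ m).eval x = if m % 2 = 0 then 1 else -((m : ℝ)+1)/2 * x)
  ∧ (∀ x : ℝ, (WQ m).eval x = (-1 : ℝ)^(m+1))

lemma cp_eval_even (n : ℕ) (h : n % 2 = 0) (x : ℝ) :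
    (cp n).eval x = 2 / (n : ℝ) ∧ ((cp n).derivative).eval x = 0 := by
  unfold cp
  rw [if_neg (by omega)]
  simp

lemma cp_eval_odd (n : ℕ) (h : n % 2 = 1) (x : ℝ) :
    (cp n).eval x = x ∧ ((cp n).derivative).eval x = 1 := by
  unfold cp
  rw [if_pos h]
  simp

lemma pp2 : pp 2 = 1 := by
  rw [show pp 2 = cp 1 * pp 1 + pp 0 from rfl]
  simp [cp, pp]

lemma qq2 : qq 2 = Polynomial.X := by
  rw [show qq 2 = cp 1 * qq 1 + qq 0 from rfl]
  simp [cp, qq]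

lemma SS_main : ∀ n, SS n ∧ SS (n + 1) := by
  intro n
  induction n with
  | zero =>
    constructor
    · refine ⟨?_, ?_, ?_⟩ <;> intro x <;>
        · norm_num [Γ, KQ, WQ, pp, qq, cp]
          try ring
    · refine ⟨?_, ?_, ?_⟩ <;> intro x <;>
        · norm_num [Γ, KQ, WQ, pp2, qq2, pp, qq, cp]
          try ring
  | succ k ih =>
    obtain ⟨⟨hΓ0, hK0, hW0⟩, hΓ1, hK1, hW1⟩ := ih
    have hΓ2 := congrArg (Polynomial.eval ·) (hGamma k)
    have hK2 := congrArg (Polynomial.eval ·) (hKrec k)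
    have hW2 := congrArg (Polynomial.eval ·) (hWrec k)
    refine ⟨⟨hΓ1, hK1, hW1⟩, ?_, ?_, ?_⟩ <;> intro x
    · have h := congrArg (Polynomial.eval x) (hGamma k)
      simp only [Polynomial.eval_add, Polynomial.eval_mul, Polynomial.eval_ofNat] at h
      rw [h, hΓ1, hK1]
      rcases Nat.even_or_odd k with hk | hk
      · have hk0 : k % 2 = 0 := Nat.even_iff.mp hk
        obtain ⟨hc, -⟩ := cp_eval_even (k+2) (by omega) x
        rw [hc, if_neg (by omega)]
        have e2 : (-1 : ℝ)^(k+1+1) = 1 := Even.neg_one_pow (Nat.even_iff.mpr (by omega))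
        have e3 : (-1 : ℝ)^(k+2+1) = -1 := Odd.neg_one_pow (Nat.odd_iff.mpr (by omega))
        rw [e2, e3]
        have hne : ((k : ℝ) + 2) ≠ 0 := by positivity
        push_cast
        field_simp
        ring
      · have hk0 : k % 2 = 1 := Nat.odd_iff.mp hk
        obtain ⟨hc, -⟩ := cp_eval_odd (k+2) (by omega) x
        rw [hc, if_pos (by omega)]
        have e2 : (-1 : ℝ)^(k+1+1) = -1 := Odd.neg_one_pow (Nat.odd_iff.mpr (by omega))
        have e3 : (-1 : ℝ)^(k+2+1) = 1 := Even.neg_one_pow (Nat.even_iff.mpr (by omega))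
        rw [e2, e3]
        ring
    · have h := congrArg (Polynomial.eval x) (hKrec k)
      simp only [Polynomial.eval_add, Polynomial.eval_mul, Polynomial.eval_pow,
        Polynomial.eval_X] at h
      rw [h, hΓ1, hK1, hK0, hW1]
      rcases Nat.even_or_odd k with hk | hk
      · have hk0 : k % 2 = 0 := Nat.even_iff.mp hk
        obtain ⟨hc, hc'⟩ := cp_eval_even (k+2) (by omega) x
        rw [hc, hc', if_neg (by omega), if_pos hk0, if_pos (by omega)]
        have e2 : (-1 : ℝ)^(k+1+1) = 1 := Even.neg_one_pow (Nat.even_iff.mpr (by omega))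
        rw [e2]
        have hne : ((k : ℝ) + 2) ≠ 0 := by positivity
        push_cast
        field_simp
        ring
      · have hk0 : k % 2 = 1 := Nat.odd_iff.mp hk
        obtain ⟨hc, hc'⟩ := cp_eval_odd (k+2) (by omega) x
        rw [hc, hc', if_pos (by omega), if_neg (by omega), if_neg (by omega)]
        have e2 : (-1 : ℝ)^(k+1+1) = -1 := Odd.neg_one_pow (Nat.odd_iff.mpr (by omega))
        rw [e2]
        push_cast
        ring
    · have h := congrArg (Polynomial.eval x) (hWrec k)
      simp only [Polynomial.eval_neg] at h
      rw [h, hW1, pow_succ _ (k+1+1)]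
      ring

theorem stmt_14 (m : ℕ) (hm : 1 ≤ m) (x : ℝ) :
    γ (m + 1) x = (-1 : ℝ) ^ m * x := by
  rw [γ_eq, (SS_main (m+1)).1.1]
  rw [show m + 1 + 1 = m + 2 from rfl, pow_succ, pow_succ]
  ring
end

section
/- For every real x > 0, F(x) = lim_{n→∞} P_n(x)/Q_n(x), i.e. the continued fraction 1/(x + 1/(1 + 1/(x + 1/(1/2 + ...)))) with partial quotients c_m (c_m = x for odd m, c_m = 2/m for even m) converges to F(x) = ∫_0^∞ e^{-t}/(t+x) dt. -/
/-! With `r = t / (t + x)`, put `A k = ∫ e^{-t} r^k` and `B k = ∫ e^{-t} r^k / (t + x)` over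
`(0, ∞)`, so `A 0 = 1` and `B 0 = F x`. The remainders `Q_n F - P_n` obey the recurrence of
`P_n` and `Q_n`; the pointwise identity `A (k+1) = A k - x B k` and the integration by parts
`A (k+1) = (k+1) (B k - B (k+1))` show that they alternate between `B k` and `-A (k+1)`.
As `0 ≤ B k ≤ A k / x` and `A k → 0` by dominated convergence, the remainders tend to `0`, and
`Q_n ≥ min x 1` turns this into convergence of `P_n / Q_n`. -/

open MeasureTheory Real Set Filter Topology

namespace ExpIntegralCF

variable {x : ℝ}

noncomputable def A (x : ℝ) (k : ℕ) : ℝ := ∫ t in Ioi 0, exp (-t) * (t / (t + x)) ^ k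

noncomputable def B (x : ℝ) (k : ℕ) : ℝ :=
  ∫ t in Ioi 0, exp (-t) * ((t / (t + x)) ^ k / (t + x))

lemma integrableOn_exp_neg_mul {f : ℝ → ℝ} {C : ℝ} (hf : ContinuousOn f (Ioi 0))
    (hC : ∀ t ∈ Ioi (0 : ℝ), ‖f t‖ ≤ C) :
    IntegrableOn (fun t => exp (-t) * f t) (Ioi 0) :=
  (integrableOn_exp_neg_Ioi 0).mul_bdd (hf.aestronglyMeasurable measurableSet_Ioi)
    ((ae_restrict_iff' measurableSet_Ioi).2 (ae_of_all _ hC))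

lemma ratio_mem_Ico (hx : 0 < x) {t : ℝ} (ht : 0 ≤ t) : t / (t + x) ∈ Ico 0 1 :=
  ⟨by positivity, (div_lt_one (by linarith)).2 (by linarith)⟩

lemma continuousOn_ratio_pow_div (hx : 0 < x) (k j : ℕ) :
    ContinuousOn (fun t => (t / (t + x)) ^ k / (t + x) ^ j) (Ioi 0) := by
  have hpos : ∀ t ∈ Ioi (0 : ℝ), t + x ≠ 0 := fun t ht => by linarith [ht.out]
  have hden : ContinuousOn (fun t : ℝ => t + x) (Ioi 0) := by fun_prop
  exact ((continuousOn_id.div hden hpos).pow k).div (hden.pow j)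
    fun t ht => pow_ne_zero j (hpos t ht)

lemma norm_ratio_pow_div_le (hx : 0 < x) (k j : ℕ) {t : ℝ} (ht : 0 < t) :
    ‖(t / (t + x)) ^ k / (t + x) ^ j‖ ≤ (x ^ j)⁻¹ := by
  obtain ⟨h0, h1⟩ := ratio_mem_Ico hx ht.le
  rw [norm_div, norm_pow, norm_pow, Real.norm_of_nonneg h0, Real.norm_of_nonneg (by linarith),
    div_eq_mul_inv]
  exact (mul_le_of_le_one_left (by positivity) (pow_le_one₀ h0 h1.le)).trans
    (inv_anti₀ (by positivity) (pow_le_pow_left₀ hx.le (by linarith) j))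

lemma integrableOn_A (hx : 0 < x) (k : ℕ) :
    IntegrableOn (fun t => exp (-t) * (t / (t + x)) ^ k) (Ioi 0) := by
  simpa using integrableOn_exp_neg_mul (continuousOn_ratio_pow_div hx k 0)
    (fun t ht => norm_ratio_pow_div_le hx k 0 ht)

lemma integrableOn_B (hx : 0 < x) (k : ℕ) :
    IntegrableOn (fun t => exp (-t) * ((t / (t + x)) ^ k / (t + x))) (Ioi 0) := by
  simpa using integrableOn_exp_neg_mul (continuousOn_ratio_pow_div hx k 1)
    (fun t ht => norm_ratio_pow_div_le hx k 1 ht)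

lemma A_zero : A x 0 = 1 := by
  simpa [A] using integral_exp_neg_Ioi_zero

lemma B_zero : B x 0 = F x := by
  simp [B, F, div_eq_mul_inv]

lemma A_nonneg (hx : 0 < x) (k : ℕ) : 0 ≤ A x k :=
  setIntegral_nonneg measurableSet_Ioi fun t ht => by
    have := (ratio_mem_Ico hx (le_of_lt ht)).1; positivity

lemma B_nonneg (hx : 0 < x) (k : ℕ) : 0 ≤ B x k :=
  setIntegral_nonneg measurableSet_Ioi fun t ht => by
    have := (ratio_mem_Ico hx (le_of_lt ht)).1; have : 0 < t + x := by linarith [ht.out]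
    positivity

lemma B_le (hx : 0 < x) (k : ℕ) : B x k ≤ A x k / x := by
  rw [A, B, ← integral_div]
  refine setIntegral_mono_on (integrableOn_B hx k) ((integrableOn_A hx k).div_const x)
    measurableSet_Ioi fun t ht => ?_
  have := (ratio_mem_Ico hx (le_of_lt ht)).1
  rw [mul_div_assoc]
  exact mul_le_mul_of_nonneg_left
    (div_le_div_of_nonneg_left (pow_nonneg this k) hx (le_add_of_nonneg_left (le_of_lt ht)))
    (exp_pos _).le

lemma A_succ (hx : 0 < x) (k : ℕ) : A x (k + 1) = A x k - x * B x k := by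
  rw [A, A, B, ← integral_const_mul, ← integral_sub (integrableOn_A hx k)
    ((integrableOn_B hx k).const_mul x)]
  refine setIntegral_congr_fun measurableSet_Ioi fun t ht => ?_
  have : t + x ≠ 0 := by linarith [ht.out]
  rw [pow_succ]
  field_simp
  ring

lemma hasDerivAt_exp_neg_mul_ratio_pow (hx : 0 < x) (k : ℕ) {t : ℝ} (ht : 0 ≤ t) :
    HasDerivAt (fun t => exp (-t) * (t / (t + x)) ^ (k + 1))
      ((k + 1) * (exp (-t) * ((t / (t + x)) ^ k / (t + x))
        - exp (-t) * ((t / (t + x)) ^ (k + 1) / (t + x))) - exp (-t) * (t / (t + x)) ^ (k + 1))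
      t := by
  have hne : t + x ≠ 0 := by linarith
  have hexp : HasDerivAt (fun t => exp (-t)) (-exp (-t)) t := by
    simpa using (hasDerivAt_neg t).exp
  have hratio : HasDerivAt (fun t => t / (t + x)) (x / (t + x) ^ 2) t := by
    refine ((hasDerivAt_id' t).fun_div ((hasDerivAt_id' t).add_const x) hne).congr_deriv ?_
    ring
  refine (hexp.fun_mul (hratio.fun_pow (k + 1))).congr_deriv ?_
  rw [Nat.add_sub_cancel, pow_succ]
  push_cast
  generalize (t / (t + x)) ^ k = p
  field_simp
  ring

lemma A_succ_eq_mul_B_sub (hx : 0 < x) (k : ℕ) :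
    A x (k + 1) = (k + 1) * (B x k - B x (k + 1)) := by
  have hB : IntegrableOn (fun t => (k + 1) * (exp (-t) * ((t / (t + x)) ^ k / (t + x))
      - exp (-t) * ((t / (t + x)) ^ (k + 1) / (t + x)))) (Ioi 0) :=
    ((integrableOn_B hx k).sub (integrableOn_B hx (k + 1))).const_mul _
  have hlim : Tendsto (fun t => exp (-t) * (t / (t + x)) ^ (k + 1)) atTop (𝓝 0) := by
    refine squeeze_zero' ?_ ?_ tendsto_exp_neg_atTop_nhds_zero
    · filter_upwards [eventually_ge_atTop 0] with t ht
      have := (ratio_mem_Ico hx ht).1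
      positivity
    · filter_upwards [eventually_ge_atTop 0] with t ht
      obtain ⟨h0, h1⟩ := ratio_mem_Ico hx ht
      exact mul_le_of_le_one_right (exp_pos _).le (pow_le_one₀ h0 h1.le)
  have hibp := integral_Ioi_of_hasDerivAt_of_tendsto'
    (fun t ht => hasDerivAt_exp_neg_mul_ratio_pow hx k ht.out) (hB.sub (integrableOn_A hx (k + 1)))
    hlim
  rw [integral_sub hB (integrableOn_A hx (k + 1)), integral_const_mul,
    integral_sub (integrableOn_B hx k) (integrableOn_B hx (k + 1))] at hibp
  rw [show exp (-0) * (0 / (0 + x)) ^ (k + 1) = 0 by simp, sub_zero] at hibp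
  rw [A, B, B]
  linarith

lemma tendsto_A (hx : 0 < x) : Tendsto (A x) atTop (𝓝 0) := by
  have hlim := tendsto_integral_of_dominated_convergence (μ := volume.restrict (Ioi 0))
    (fun t => exp (-t)) (fun k => (integrableOn_A hx k).aestronglyMeasurable)
    (integrableOn_exp_neg_Ioi 0)
    (fun k => (ae_restrict_iff' measurableSet_Ioi).2 <| ae_of_all _ fun t ht => by
      simpa using mul_le_mul_of_nonneg_left (norm_ratio_pow_div_le hx k 0 ht) (exp_pos (-t)).le)
    ((ae_restrict_iff' measurableSet_Ioi).2 <| ae_of_all _ fun t ht => by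
      obtain ⟨h0, h1⟩ := ratio_mem_Ico hx (le_of_lt ht)
      simpa using (tendsto_pow_atTop_nhds_zero_of_lt_one h0 h1).const_mul (exp (-t)))
  simp only [integral_zero] at hlim
  exact hlim

noncomputable def remainder (x : ℝ) (n : ℕ) : ℝ := Q n x * F x - P n x

lemma remainder_add_two (n : ℕ) :
    remainder x (n + 2) = c (n + 1) x * remainder x (n + 1) + remainder x n := by
  simp only [remainder, P, Q]
  ring

lemma c_odd (k : ℕ) : c (2 * k + 1) x = x := by
  simp [c]

lemma c_even (k : ℕ) : c (2 * k + 2) x = 1 / (k + 1) := by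
  rw [c, if_neg (by omega)]
  push_cast
  field_simp

lemma remainder_odd_even (hx : 0 < x) (k : ℕ) :
    remainder x (2 * k + 1) = B x k ∧ remainder x (2 * k + 2) = -A x (k + 1) := by
  induction k with
  | zero =>
    have h1 : remainder x 1 = B x 0 := by simp [remainder, P, Q, B_zero]
    refine ⟨h1, ?_⟩
    rw [remainder_add_two, h1, c_odd 0, A_succ hx, A_zero]
    simp [remainder, P, Q, sub_eq_add_neg]
  | succ k ih =>
    have hodd : remainder x (2 * (k + 1) + 1) = B x (k + 1) := by
      rw [show 2 * (k + 1) + 1 = 2 * k + 1 + 2 by ring, remainder_add_two, c_even, ih.1, ih.2,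
        A_succ_eq_mul_B_sub hx]
      field_simp
      ring
    refine ⟨hodd, ?_⟩
    rw [show 2 * (k + 1) + 2 = 2 * (k + 1) + 1 + 1 by ring, remainder_add_two, c_odd, hodd,
      show 2 * (k + 1) = 2 * k + 2 by ring, ih.2, A_succ hx (k + 1)]
    ring

lemma A_succ_le (hx : 0 < x) (k : ℕ) : A x (k + 1) ≤ A x k := by
  rw [A_succ hx]
  linarith [mul_nonneg hx.le (B_nonneg hx k)]

lemma abs_remainder_succ_le (hx : 0 < x) (n : ℕ) :
    |remainder x (n + 1)| ≤ (x⁻¹ + 1) * A x (n / 2) := by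
  obtain ⟨k, rfl | rfl⟩ := Nat.even_or_odd' n
  · rw [(remainder_odd_even hx k).1, abs_of_nonneg (B_nonneg hx k),
      show 2 * k / 2 = k by omega]
    linarith [B_le hx k, div_eq_inv_mul (A x k) x, A_nonneg hx k]
  · rw [(remainder_odd_even hx k).2, abs_neg, abs_of_nonneg (A_nonneg hx _),
      show (2 * k + 1) / 2 = k by omega]
    have : 0 ≤ x⁻¹ * A x k := mul_nonneg (inv_nonneg.2 hx.le) (A_nonneg hx k)
    linarith [A_succ_le hx k]

lemma tendsto_remainder_succ (hx : 0 < x) :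
    Tendsto (fun n => remainder x (n + 1)) atTop (𝓝 0) := by
  have hhalf : Tendsto (fun n : ℕ => n / 2) atTop atTop :=
    tendsto_atTop_atTop.2 fun b => ⟨2 * b, fun n hn => by omega⟩
  have hbound := ((tendsto_A hx).comp hhalf).const_mul (x⁻¹ + 1)
  rw [mul_zero] at hbound
  exact squeeze_zero_norm (abs_remainder_succ_le hx) hbound

lemma c_nonneg (hx : 0 ≤ x) (n : ℕ) : 0 ≤ c n x := by
  unfold c
  split_ifs <;> positivity

lemma Q_nonneg (hx : 0 ≤ x) : ∀ n, 0 ≤ Q n x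
  | 0 => le_rfl
  | 1 => zero_le_one
  | n + 2 => add_nonneg (mul_nonneg (c_nonneg hx _) (Q_nonneg hx (n + 1))) (Q_nonneg hx n)

lemma min_le_Q_succ (hx : 0 ≤ x) : ∀ n, min x 1 ≤ Q (n + 1) x
  | 0 => min_le_right x 1
  | 1 => by simp [Q, c]
  | n + 2 => by
    have := mul_nonneg (c_nonneg hx (n + 2)) (Q_nonneg hx (n + 2))
    have := min_le_Q_succ hx n
    simp only [Q] at *
    linarith

end ExpIntegralCF

open ExpIntegralCF in
/-- `P (n+1)`, `Q (n+1)` are the paper's `P_n`, `Q_n`. -/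
theorem stmt_18 (x : ℝ) (hx : 0 < x) :
    Filter.Tendsto (fun n : ℕ => P (n + 1) x / Q (n + 1) x) Filter.atTop (nhds (F x)) := by
  have hmin : 0 < min x 1 := lt_min hx one_pos
  have hQ : ∀ n, 0 < Q (n + 1) x := fun n => hmin.trans_le (min_le_Q_succ hx.le n)
  have hdiff :
      ∀ n, ‖P (n + 1) x / Q (n + 1) x - F x‖ ≤ ‖remainder x (n + 1)‖ / min x 1 := by
    intro n
    rw [show P (n + 1) x / Q (n + 1) x - F x = -remainder x (n + 1) / Q (n + 1) x by
      rw [remainder]; field_simp [(hQ n).ne']; ring, norm_div, norm_neg,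
      Real.norm_of_nonneg (hQ n).le]
    exact div_le_div_of_nonneg_left (norm_nonneg _) hmin (min_le_Q_succ hx.le n)
  have hlim := (tendsto_remainder_succ hx).norm.div_const (min x 1)
  rw [norm_zero, zero_div] at hlim
  exact tendsto_sub_nhds_zero_iff.1 (squeeze_zero_norm hdiff hlim)
end
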